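/- Let S and A be finite nonempty types, T : S → A → S → ℝ a transition kernel (T s a s' ≥ 0 and ∑_{s'} T s a s' = 1 for all s, a), R : S → A → S → ℝ a reward function, γ ∈ [0,1), d : S → ℝ a potential function, and λ ∈ ℝ. If Q satisfies the Bellman optimality equation for reward R and Q' satisfies the Bellman optimality equation for the shaped reward R'(s,a,s') = R(s,a,s') + λ·(γ·d(s') − d(s)), then for all s, a: Q'(s,a) = Q(s,a) − λ·d(s). -/
import Mathlib


/-- Maximum of a real-valued function over a finite nonempty type,
taken as `Finset.max'` over `Finset.univ`. -/
noncomputable def fmax {A : Type*} [Fintype A] [Nonempty A] (f : A → ℝ) : ℝ :=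
  (Finset.univ.image f).max' (Finset.univ_nonempty.image f)

lemma le_fmax {A : Type*} [Fintype A] [Nonempty A] (f : A → ℝ) (a : A) : f a ≤ fmax f :=
  Finset.le_max' _ _ (Finset.mem_image_of_mem f (Finset.mem_univ a))

lemma exists_fmax {A : Type*} [Fintype A] [Nonempty A] (f : A → ℝ) : ∃ a, fmax f = f a := by
  obtain ⟨a, -, h⟩ := Finset.mem_image.mp ((Finset.univ.image f).max'_mem _)
  exact ⟨a, h.symm⟩

lemma fmax_le {A : Type*} [Fintype A] [Nonempty A] {f : A → ℝ} {c : ℝ}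
    (h : ∀ a, f a ≤ c) : fmax f ≤ c := by
  obtain ⟨a, ha⟩ := exists_fmax f
  rw [ha]; exact h a

lemma fmax_sub_const {A : Type*} [Fintype A] [Nonempty A] (f : A → ℝ) (c : ℝ) :
    fmax (fun a => f a - c) = fmax f - c := by
  apply le_antisymm
  · apply fmax_le; intro a
    have := le_fmax f a; linarith
  · obtain ⟨a, ha⟩ := exists_fmax f
    have := le_fmax (fun a => f a - c) a
    linarith

lemma abs_fmax_sub {A : Type*} [Fintype A] [Nonempty A] (f g : A → ℝ) {c : ℝ}
    (h : ∀ a, |f a - g a| ≤ c) : |fmax f - fmax g| ≤ c := by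
  rw [abs_le]
  constructor
  · obtain ⟨a, ha⟩ := exists_fmax g
    have h1 := le_fmax f a
    have h2 := abs_le.mp (h a)
    linarith [h2.1]
  · obtain ⟨a, ha⟩ := exists_fmax f
    have h1 := le_fmax g a
    have h2 := abs_le.mp (h a)
    linarith [h2.2]

/-- The optimal Q-function of the potential-based shaped MDP equals the
optimal Q-function of the original MDP shifted by `lam * d s`. -/
theorem shaped_Q_eq_shifted
    {S A : Type*} [Fintype S] [Nonempty S] [Fintype A] [Nonempty A]
    (T : S → A → S → ℝ) (hT0 : ∀ s a s', 0 ≤ T s a s')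
    (hT1 : ∀ s a, ∑ s', T s a s' = 1)
    (R : S → A → S → ℝ) (γ : ℝ) (hγ0 : 0 ≤ γ) (hγ1 : γ < 1)
    (d : S → ℝ) (lam : ℝ)
    (Q Q' : S → A → ℝ)
    (hQ : ∀ s a, Q s a =
      ∑ s', T s a s' * (R s a s' + γ * fmax (fun a' => Q s' a')))
    (hQ' : ∀ s a, Q' s a =
      ∑ s', T s a s' * ((R s a s' + lam * (γ * d s' - d s)) +
        γ * fmax (fun a' => Q' s' a'))) :
    ∀ s a, Q' s a = Q s a - lam * d s := by
  set D : S × A → ℝ := fun p => Q' p.1 p.2 - Q p.1 p.2 + lam * d p.1 with hD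
  set M : ℝ := fmax (fun p => |D p|) with hM
  have hM0 : 0 ≤ M := by
    obtain ⟨p, hp⟩ := exists_fmax (fun p => |D p|)
    rw [hM, hp]; exact abs_nonneg _
  -- key identity: D (s,a) = γ * ∑ T * (fmax Q' s' - fmax Q s' + lam * d s')
  have key : ∀ s a, D (s, a) =
      γ * ∑ s', T s a s' *
        (fmax (fun a' => Q' s' a') - fmax (fun a' => Q s' a') + lam * d s') := by
    intro s a
    have h1 := hQ s a
    have h2 := hQ' s a
    have hsum := hT1 s a
    simp only [hD]
    rw [h1, h2, Finset.mul_sum, ← Finset.sum_sub_distrib]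
    have : lam * d s = ∑ s', T s a s' * (lam * d s) := by
      rw [← Finset.sum_mul, hsum, one_mul]
    rw [this, ← Finset.sum_add_distrib]
    apply Finset.sum_congr rfl
    intro s' _
    ring
  -- bound: each |D| ≤ γ * M
  have bound : ∀ p : S × A, |D p| ≤ γ * M := by
    rintro ⟨s, a⟩
    rw [key s a, abs_mul, abs_of_nonneg hγ0]
    have : |∑ s', T s a s' *
        (fmax (fun a' => Q' s' a') - fmax (fun a' => Q s' a') + lam * d s')| ≤ M := by
      calc |∑ s', T s a s' * (fmax (fun a' => Q' s' a') - fmax (fun a' => Q s' a') + lam * d s')|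
          ≤ ∑ s', |T s a s' * (fmax (fun a' => Q' s' a') - fmax (fun a' => Q s' a') + lam * d s')| :=
            Finset.abs_sum_le_sum_abs _ _
        _ ≤ ∑ s', T s a s' * M := by
            apply Finset.sum_le_sum
            intro s' _
            rw [abs_mul, abs_of_nonneg (hT0 s a s')]
            apply mul_le_mul_of_nonneg_left _ (hT0 s a s')
            have heq : fmax (fun a' => Q s' a') - lam * d s'
                = fmax (fun a' => Q s' a' - lam * d s') := (fmax_sub_const _ _).symm
            have : fmax (fun a' => Q' s' a') - fmax (fun a' => Q s' a') + lam * d s'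
                = fmax (fun a' => Q' s' a') - fmax (fun a' => Q s' a' - lam * d s') := by
              rw [← heq]; ring
            rw [this]
            apply abs_fmax_sub
            intro a'
            have := le_fmax (fun p => |D p|) (s', a')
            simp only [hD] at this ⊢
            calc |Q' s' a' - (Q s' a' - lam * d s')|
                = |Q' s' a' - Q s' a' + lam * d s'| := by ring_nf
              _ ≤ M := this
        _ = M := by rw [← Finset.sum_mul, hT1, one_mul]
    exact mul_le_mul_of_nonneg_left this hγ0
  have hMle : M ≤ γ * M := by
    obtain ⟨p, hp⟩ := exists_fmax (fun p => |D p|)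
    calc M = |D p| := by rw [hM, hp]
      _ ≤ γ * M := bound p
  have hMz : M = 0 := by nlinarith
  intro s a
  have h1 : |D (s, a)| ≤ M := le_fmax (fun p => |D p|) (s, a)
  rw [hMz] at h1
  have : D (s, a) = 0 := abs_eq_zero.mp (le_antisymm h1 (abs_nonneg _))
  simp only [hD] at this
  linarith
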